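/- arXiv:1902.05405 — 2 statements merged into one kernel-verified Lean document; each statement's English description precedes it below -/
import Mathlib

section
/- Any integer matrix V of size 2g×2g with V - Vᵀ equal to the standard symplectic form J is congruent, via a matrix P ∈ GL(2g,ℤ) preserving J (i.e., P J Pᵀ = J), to a matrix W (W = P V Pᵀ) such that every odd-indexed diagonal entry W(2i,2i) is odd. -/
open Matrix

/-- The standard symplectic form of size `2g`: block diagonal with `g` copies of
`[[0,1],[-1,0]]`. -/
def stdSymplectic (g : ℕ) : Matrix (Fin (2 * g)) (Fin (2 * g)) ℤ :=
  fun i j =>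
    if (i : ℕ) + 1 = (j : ℕ) ∧ Even (i : ℕ) then 1
    else if (j : ℕ) + 1 = (i : ℕ) ∧ Even (j : ℕ) then -1
    else 0

/-!
Reindexing `Fin (2g)` as `Fin 2 × Fin g` turns `J` into the block-diagonal matrix with blocks
`S = [[0,1],[-1,0]]`. Since `B S Bᵀ = det B • S` for `2×2` matrices, a block-diagonal `P` whose
blocks `Bᵢ` lie in `SL₂(ℤ)` preserves `J`, and the `(2i,2i)` entry of `P V Pᵀ` is `x A xᵀ`, where
`x` is the first row of `Bᵢ` and `A` is the `i`-th diagonal `2×2` block of `V`. As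
`A₀₁ - A₁₀ = 1`, the form `x A xᵀ ≡ A₀₀ x₀² + x₀ x₁ + A₁₁ x₁² (mod 2)` is odd at one of
`(1,0)`, `(0,1)`, `(1,1)`, and each of these is the first row of a matrix in `SL₂(ℤ)`.
-/

namespace Matrix

variable {l m n p o α : Type*}

theorem reindex_mul_mul_transpose_reindex [Fintype m] [Fintype n] [NonUnitalCommSemiring α]
    (e : m ≃ n) (X : Matrix m m α) (V : Matrix n n α) :
    reindex e e X * V * (reindex e e X)ᵀ = reindex e e (X * V.submatrix e e * Xᵀ) := by
  conv_lhs => rw [← submatrix_id_id V, ← Equiv.self_comp_symm e, ← submatrix_submatrix]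
  simp only [reindex_apply, transpose_submatrix, submatrix_mul_equiv]

theorem blockDiag_blockDiagonal_mul_mul_blockDiagonal [Fintype m] [Fintype n] [Fintype o]
    [DecidableEq o] [NonUnitalNonAssocSemiring α]
    (A : o → Matrix l m α) (M : Matrix (m × o) (n × o) α) (C : o → Matrix n p α) (k : o) :
    blockDiag (blockDiagonal A * M * blockDiagonal C) k = A k * blockDiag M k * C k := by
  ext i j
  simp [blockDiag_apply, mul_apply, blockDiagonal_apply, Fintype.sum_prod_type, Finset.sum_mul]

theorem reindex_blockDiagonal_mul_mul_transpose_apply [Fintype m] [Fintype n] [Fintype o]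
    [DecidableEq o] [CommSemiring α] (e : m × o ≃ n) (B : o → Matrix m m α) (V : Matrix n n α)
    (r s : m) (k : o) :
    (reindex e e (blockDiagonal B) * V * (reindex e e (blockDiagonal B))ᵀ) (e (r, k)) (e (s, k)) =
      (B k * blockDiag (V.submatrix e e) k * (B k)ᵀ) r s := by
  have h := congrFun₂ (blockDiag_blockDiagonal_mul_mul_blockDiagonal B (V.submatrix e e)
    (fun k => (B k)ᵀ) k) r s
  rw [blockDiag_apply, ← blockDiagonal_transpose] at h
  rw [reindex_mul_mul_transpose_reindex]
  simpa only [reindex_apply, submatrix_apply, Equiv.symm_apply_apply] using h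

end Matrix

def symplecticBlock (R : Type*) [Ring R] : Matrix (Fin 2) (Fin 2) R := !![0, 1; -1, 0]

theorem mul_symplecticBlock_mul_transpose {R : Type*} [CommRing R]
    (B : Matrix (Fin 2) (Fin 2) R) :
    B * symplecticBlock R * Bᵀ = B.det • symplecticBlock R := by
  ext i j
  fin_cases i <;> fin_cases j <;>
    simp [symplecticBlock, det_fin_two, mul_apply, Fin.sum_univ_two] <;> ring

theorem blockDiagonal_mul_symplecticBlock_mul_transpose {o R : Type*} [Fintype o] [DecidableEq o]
    [CommRing R] (B : o → Matrix (Fin 2) (Fin 2) R) (hB : ∀ k, (B k).det = 1) :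
    blockDiagonal B * blockDiagonal (fun _ => symplecticBlock R) * (blockDiagonal B)ᵀ =
      blockDiagonal fun _ => symplecticBlock R := by
  simp only [blockDiagonal_transpose, ← blockDiagonal_mul, mul_symplecticBlock_mul_transpose, hB,
    one_smul]

theorem exists_det_eq_one_odd_mul_mul_transpose_apply_zero_zero (A : Matrix (Fin 2) (Fin 2) ℤ)
    (hA : A - Aᵀ = symplecticBlock ℤ) :
    ∃ B : Matrix (Fin 2) (Fin 2) ℤ, B.det = 1 ∧ Odd ((B * A * Bᵀ) 0 0) := by
  have h01 : A 0 1 - A 1 0 = 1 := by simpa [symplecticBlock] using congrFun₂ hA 0 1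
  by_cases h0 : Odd (A 0 0)
  · exact ⟨1, by simp, by simpa using h0⟩
  by_cases h1 : Odd (A 1 1)
  · refine ⟨symplecticBlock ℤ, by simp [symplecticBlock], ?_⟩
    simpa [symplecticBlock, mul_apply, Fin.sum_univ_two, vecMul, dotProduct] using h1
  let T : Matrix (Fin 2) (Fin 2) ℤ := !![1, 1; 0, 1]
  refine ⟨T, by simp [T, det_fin_two], ?_⟩
  have hT : (T * A * Tᵀ) 0 0 = A 0 0 + A 1 1 + 2 * A 1 0 + 1 := by
    simp [T, mul_apply, Fin.sum_univ_two, vecMul, dotProduct]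
    linarith
  rw [Int.not_odd_iff_even] at h0 h1
  rw [hT]
  exact ((h0.add h1).add (even_two_mul _)).add_one

def pairEquiv (g : ℕ) : Fin 2 × Fin g ≃ Fin (2 * g) where
  toFun p := ⟨2 * p.2 + p.1, by omega⟩
  invFun k := (⟨k % 2, by omega⟩, ⟨k / 2, by omega⟩)
  left_inv p := by ext <;> simp <;> omega
  right_inv k := by ext; simp; omega

theorem stdSymplectic_submatrix_pairEquiv (g : ℕ) :
    (stdSymplectic g).submatrix (pairEquiv g) (pairEquiv g) =
      blockDiagonal fun _ => symplecticBlock ℤ := by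
  ext ⟨r, a⟩ ⟨s, b⟩
  rw [submatrix_apply, blockDiagonal_apply]
  fin_cases r <;> fin_cases s <;> simp [stdSymplectic, pairEquiv, symplecticBlock, Fin.ext_iff]
  all_goals split_ifs <;> omega

/-- Any `2g×2g` integer matrix `V` with `V - Vᵀ = J` (the standard symplectic form)
is congruent by some `P ∈ GL(2g,ℤ)` with `P J Pᵀ = J` to `W = P V Pᵀ` whose
diagonal entries `W(2i,2i)` are all odd. -/
theorem stmt2 (g : ℕ) (V : Matrix (Fin (2 * g)) (Fin (2 * g)) ℤ)
    (hV : V - V.transpose = stdSymplectic g) :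
    ∃ P : Matrix (Fin (2 * g)) (Fin (2 * g)) ℤ, IsUnit P.det ∧
      P * stdSymplectic g * P.transpose = stdSymplectic g ∧
      ∀ i : Fin g,
        Odd ((P * V * P.transpose)
          ⟨2 * (i : ℕ), by have := i.isLt; omega⟩
          ⟨2 * (i : ℕ), by have := i.isLt; omega⟩) := by
  set e := pairEquiv g
  have hJ : (stdSymplectic g).submatrix e e = _ := stdSymplectic_submatrix_pairEquiv g
  have hblock (i : Fin g) :
      blockDiag (V.submatrix e e) i - (blockDiag (V.submatrix e e) i)ᵀ = symplecticBlock ℤ := by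
    have h := congrArg (fun M => blockDiag (M.submatrix e e) i) hV
    simpa only [submatrix_sub, blockDiag_sub, Pi.sub_apply, ← transpose_submatrix,
      blockDiag_transpose, hJ, blockDiag_blockDiagonal] using h
  choose B hBdet hBodd using
    fun i => exists_det_eq_one_odd_mul_mul_transpose_apply_zero_zero _ (hblock i)
  refine ⟨reindex e e (blockDiagonal B), ?_, ?_, fun i => ?_⟩
  · simp [det_blockDiagonal, hBdet]
  · rw [reindex_mul_mul_transpose_reindex, hJ,
      blockDiagonal_mul_symplecticBlock_mul_transpose B hBdet, ← hJ]
    simp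
  · rw [show (⟨2 * (i : ℕ), _⟩ : Fin (2 * g)) = e (0, i) from rfl,
      reindex_blockDiagonal_mul_mul_transpose_apply]
    exact hBodd i
end

section
/- Let R = 𝔽₃[t, t⁻¹] be the ring of Laurent polynomials over the field with three elements, and let V = [[0,1],[2,0]] as a matrix over R. Then the R-module M = R² / (V - t·Vᵀ)R² is isomorphic to (R/(t+1))², and in particular M requires exactly 2 generators (its minimal number of generators as an R-module is 2). -/
open Matrix LaurentPolynomial

/-- `R = 𝔽₃[t,t⁻¹]`, the ring of Laurent polynomials over the field with 3 elements. -/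
abbrev R3 : Type := LaurentPolynomial (ZMod 3)

/-- The Seifert matrix `V = [[0,1],[2,0]]`, viewed over `R3`. -/
noncomputable def seifertV : Matrix (Fin 2) (Fin 2) R3 := !![0, 1; 2, 0]

/-- The presented module `M = R² / (V - t·Vᵀ) R²`, the cokernel of `V - t·Vᵀ`. -/
noncomputable abbrev presM : Type :=
  (Fin 2 → R3) ⧸ LinearMap.range (Matrix.toLin' (seifertV - (T 1 : R3) • seifertV.transpose))

/-!
Over `𝔽₃` we have `2 = -1`, so `V - t·Vᵀ = [[0, t+1], [-(t+1), 0]]`, whose image is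
`(t+1)R ⊕ (t+1)R`; hence `M ≅ (R/(t+1))²`. The ideal `(t+1)` is proper (evaluate at `t = -1`),
so `Q = R/(t+1)` is a nontrivial ring. As `R → Q` is surjective, `R`-spans of `Q`-modules are
`Q`-spans, and spanning sets of the free module `Q²` have at least `finrank Q Q² = 2` elements,
with a basis attaining the bound.
-/

section SpanningSets

variable {R S M : Type*} [CommRing R] [CommRing S] [Algebra R S] [AddCommGroup M] [Module R M]

theorem Submodule.span_eq_top_iff_of_surjective [Module S M] [IsScalarTower R S M]
    (hsurj : Function.Surjective (algebraMap R S)) (s : Set M) :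
    Submodule.span R s = ⊤ ↔ Submodule.span S s = ⊤ := by
  rw [← Submodule.restrictScalars_span R S hsurj, Submodule.restrictScalars_eq_top_iff]

variable [Nontrivial S] [Module S M] [IsScalarTower R S M]

theorem exists_finset_card_eq_finrank_span_eq_top [Module.Free S M] [Module.Finite S M]
    (hsurj : Function.Surjective (algebraMap R S)) :
    ∃ s : Finset M, s.card = Module.finrank S M ∧ Submodule.span R (s : Set M) = ⊤ := by
  classical
  let b := Module.finBasis S M
  refine ⟨Finset.univ.image b, ?_, ?_⟩
  · rw [Finset.card_image_of_injective _ b.injective, Finset.card_univ, Fintype.card_fin]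
  · rw [Submodule.span_eq_top_iff_of_surjective hsurj, Finset.coe_image, Finset.coe_univ,
      Set.image_univ, b.span_eq]

theorem finrank_le_card_of_span_eq_top (hsurj : Function.Surjective (algebraMap R S))
    {s : Finset M} (hs : Submodule.span R (s : Set M) = ⊤) : Module.finrank S M ≤ s.card := by
  rw [Submodule.span_eq_top_iff_of_surjective hsurj] at hs
  have := finrank_span_finset_le_card (R := S) s
  rwa [Set.finrank, hs, finrank_top] at this

end SpanningSets

namespace LinearEquiv

variable {R M N : Type*} [CommRing R]
  [AddCommGroup M] [Module R M] [AddCommGroup N] [Module R N]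

theorem exists_finset_card_span_eq_top (e : M ≃ₗ[R] N) {n : ℕ}
    (h : ∃ s : Finset M, s.card = n ∧ Submodule.span R (s : Set M) = ⊤) :
    ∃ s : Finset N, s.card = n ∧ Submodule.span R (s : Set N) = ⊤ := by
  classical
  obtain ⟨s, rfl, hs⟩ := h
  refine ⟨s.image e, Finset.card_image_of_injective _ e.injective, ?_⟩
  rw [Finset.coe_image, Submodule.span_image_linearEquiv, hs, Submodule.map_top, LinearEquiv.range]

theorem card_le_of_span_eq_top (e : M ≃ₗ[R] N) {n : ℕ}
    (h : ∀ s : Finset M, Submodule.span R (s : Set M) = ⊤ → n ≤ s.card)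
    (s : Finset N) (hs : Submodule.span R (s : Set N) = ⊤) : n ≤ s.card := by
  classical
  refine (h (s.image e.symm) ?_).trans Finset.card_image_le
  rw [Finset.coe_image, Submodule.span_image_linearEquiv, hs, Submodule.map_top, LinearEquiv.range]

end LinearEquiv

theorem Matrix.range_toLin'_antidiag {R : Type*} [CommRing R] (a b : R) :
    LinearMap.range (Matrix.toLin' !![0, a; b, 0]) =
      Submodule.pi Set.univ ![Ideal.span {a}, Ideal.span {b}] := by
  ext x
  simp only [LinearMap.mem_range, Submodule.mem_pi, Set.mem_univ, forall_true_left,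
    Fin.forall_fin_two, Matrix.cons_val_zero, Matrix.cons_val_one, Ideal.mem_span_singleton']
  constructor
  · rintro ⟨v, rfl⟩
    exact ⟨⟨v 1, by simp [mul_comm, vecHead, vecTail]⟩, ⟨v 0, by simp [mul_comm, vecHead]⟩⟩
  · rintro ⟨⟨c, hc⟩, ⟨d, hd⟩⟩
    refine ⟨![d, c], ?_⟩
    ext i
    fin_cases i <;> simp [← hc, ← hd, mul_comm]

noncomputable def quotientPiFinTwoEquiv {R : Type*} [CommRing R] (I J : Ideal R) :
    ((Fin 2 → R) ⧸ Submodule.pi Set.univ ![I, J]) ≃ₗ[R] (R ⧸ I) × (R ⧸ J) :=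
  (Submodule.quotientPi _).trans (LinearEquiv.piFinTwo R fun i => R ⧸ ![I, J] i)

theorem LaurentPolynomial.not_isUnit_T_one_add_one {R : Type*} [CommRing R] [Nontrivial R] :
    ¬ IsUnit (T 1 + 1 : R[T;T⁻¹]) := by
  intro h
  have := h.map (eval₂ (RingHom.id R) (-1))
  simp [eval₂_T] at this

theorem seifertV_sub_T_smul_transpose :
    seifertV - (T 1 : R3) • seifertV.transpose = !![0, T 1 + 1; -(T 1 + 1), 0] := by
  have h3 : (3 : R3) = 0 := by
    rw [← map_ofNat (C : ZMod 3 →+* R3) 3, show (3 : ZMod 3) = 0 from rfl, map_zero]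
  ext i j : 1
  fin_cases i <;> fin_cases j <;> simp [seifertV]
  · linear_combination (-T 1) * h3
  · linear_combination h3

noncomputable def presMEquiv :
    presM ≃ₗ[R3] (R3 ⧸ Ideal.span {(T 1 : R3) + 1}) × (R3 ⧸ Ideal.span {(T 1 : R3) + 1}) :=
  (Submodule.quotEquivOfEq _ _ <| by
      rw [seifertV_sub_T_smul_transpose, Matrix.range_toLin'_antidiag,
        Ideal.span_singleton_neg]).trans
    (quotientPiFinTwoEquiv _ _)

/-- `M = R²/(V - t·Vᵀ)R² ≅ (R/(t+1))²` as `R`-modules, and the minimal number of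
generators of `M` as an `R`-module is exactly 2. -/
theorem stmt3 :
    Nonempty (presM ≃ₗ[R3]
      ((R3 ⧸ Ideal.span {(T 1 : R3) + 1}) × (R3 ⧸ Ideal.span {(T 1 : R3) + 1}))) ∧
    (∃ s : Finset presM, s.card = 2 ∧ Submodule.span R3 (s : Set presM) = ⊤) ∧
    (∀ s : Finset presM, Submodule.span R3 (s : Set presM) = ⊤ → 2 ≤ s.card) := by
  set Q := R3 ⧸ Ideal.span {(T 1 : R3) + 1}
  have hsurj : Function.Surjective (algebraMap R3 Q) := Ideal.Quotient.mk_surjective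
  have : Nontrivial Q := Ideal.Quotient.nontrivial_iff.mpr <| by
    rw [Ne, Ideal.span_singleton_eq_top]
    exact not_isUnit_T_one_add_one
  have hrank : Module.finrank Q (Q × Q) = 2 := by simp
  refine ⟨⟨presMEquiv⟩, presMEquiv.symm.exists_finset_card_span_eq_top ?_,
    presMEquiv.symm.card_le_of_span_eq_top ?_⟩
  · exact hrank ▸ exists_finset_card_eq_finrank_span_eq_top hsurj
  · exact fun s hs => hrank ▸ finrank_le_card_of_span_eq_top hsurj hs
end
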